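/- Let Q be an integral quadratic form in n variables and let p be a prime with p ∤ disc Q. If v ∈ ℤⁿ is a vector with v ∉ pℤⁿ and Q(v) ≡ 0 (mod p), then there exists w ∈ ℤⁿ with w ≡ v (mod p) and Q(w) ≡ 0 (mod p²). (This holds even for p = 2.) -/

import Mathlib

open scoped BigOperators

/-- The integral quadratic form `Q(x) = ∑_{i ≤ j} a_{ij} x_i x_j` attached to the
coefficient matrix `a` (only entries with `i ≤ j` are used). -/
def Qform {n : ℕ} (a : Matrix (Fin n) (Fin n) ℤ) (x : Fin n → ℤ) : ℤ :=
  ∑ i, ∑ j, if i ≤ j then a i j * x i * x j else 0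

/-- The associated bilinear form `T(x,y) = Q(x+y) - Q(x) - Q(y)`. -/
def Tbil {n : ℕ} (a : Matrix (Fin n) (Fin n) ℤ) (x y : Fin n → ℤ) : ℤ :=
  Qform a (x + y) - Qform a x - Qform a y

/-- The Gram matrix `[T] = (T(e_i, e_j))_{i,j}`. -/
def gram {n : ℕ} (a : Matrix (Fin n) (Fin n) ℤ) : Matrix (Fin n) (Fin n) ℤ :=
  Matrix.of fun i j => Tbil a (Pi.single i 1) (Pi.single j 1)

/-- `ε(n) = 0` if `n` is even, `1` if `n` is odd. -/
def eps (n : ℕ) : ℕ := if Even n then 0 else 1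

/-- `Q` has (half-)discriminant `d`, i.e. `det [T] = 2^{ε(n)} d`. -/
def HasDisc {n : ℕ} (a : Matrix (Fin n) (Fin n) ℤ) (d : ℤ) : Prop :=
  (gram a).det = 2 ^ (eps n) * d

open Matrix

namespace HenselAux

variable {n : ℕ}

/-- Upper-triangular coefficient matrix. -/
def Umat (a : Matrix (Fin n) (Fin n) ℤ) : Matrix (Fin n) (Fin n) ℤ :=
  Matrix.of fun i j => if i ≤ j then a i j else 0

lemma Qform_eq (a : Matrix (Fin n) (Fin n) ℤ) (x : Fin n → ℤ) :
    Qform a x = x ⬝ᵥ (Umat a *ᵥ x) := by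
  simp only [Qform, dotProduct, Matrix.mulVec, Umat, Matrix.of_apply,
    Finset.mul_sum]
  refine Finset.sum_congr rfl fun i _ => Finset.sum_congr rfl fun j _ => ?_
  split <;> ring

def Gmat (a : Matrix (Fin n) (Fin n) ℤ) : Matrix (Fin n) (Fin n) ℤ :=
  Umat a + (Umat a)ᵀ

lemma Tbil_eq (a : Matrix (Fin n) (Fin n) ℤ) (x y : Fin n → ℤ) :
    Tbil a x y = x ⬝ᵥ (Gmat a *ᵥ y) := by
  have h1 : y ⬝ᵥ (Umat a *ᵥ x) = x ⬝ᵥ ((Umat a)ᵀ *ᵥ y) := by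
    rw [Matrix.mulVec_transpose, Matrix.dotProduct_mulVec, dotProduct_comm]
  simp only [Tbil, Qform_eq, Gmat, Matrix.add_mulVec, Matrix.mulVec_add,
    dotProduct_add, add_dotProduct]
  linarith

lemma gram_eq (a : Matrix (Fin n) (Fin n) ℤ) : gram a = Gmat a := by
  ext i j
  simp [_root_.gram, Tbil_eq, Matrix.mulVec_single, single_dotProduct]

lemma gram_symm (a : Matrix (Fin n) (Fin n) ℤ) : (gram a)ᵀ = gram a := by
  rw [gram_eq]
  simp [Gmat, Matrix.transpose_add, add_comm]

lemma Tbil_gram (a : Matrix (Fin n) (Fin n) ℤ) (x y : Fin n → ℤ) :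
    Tbil a x y = x ⬝ᵥ (gram a *ᵥ y) := by rw [Tbil_eq, gram_eq]

/-- `T(v, e_j) = (G v)_j`. -/
lemma Tbil_single (a : Matrix (Fin n) (Fin n) ℤ) (v : Fin n → ℤ) (j : Fin n) :
    Tbil a v (Pi.single j 1) = (gram a *ᵥ v) j := by
  have hsym : ∀ i j, gram a i j = gram a j i := fun i j => congrFun (congrFun (gram_symm a) j) i
  rw [Tbil_gram]
  simp only [dotProduct, Matrix.mulVec, Pi.single_apply, mul_ite, mul_one, mul_zero,
    Finset.sum_ite_eq', Finset.mem_univ, if_true]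
  refine Finset.sum_congr rfl fun i _ => ?_
  rw [hsym i j]; ring

lemma Tbil_self (a : Matrix (Fin n) (Fin n) ℤ) (v : Fin n → ℤ) :
    Tbil a v v = 2 * Qform a v := by
  have h2 : v + v = (2 : ℤ) • v := by
    funext i; simp only [Pi.add_apply, Pi.smul_apply, smul_eq_mul]; ring
  have hhom : Qform a ((2 : ℤ) • v) = 4 * Qform a v := by
    simp only [Qform, Finset.mul_sum]
    refine Finset.sum_congr rfl fun i _ => Finset.sum_congr rfl fun j _ => ?_
    simp only [Pi.smul_apply, smul_eq_mul]
    split <;> ring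
  simp only [Tbil, h2, hhom]
  ring

lemma Tbil_comm (a : Matrix (Fin n) (Fin n) ℤ) (x y : Fin n → ℤ) :
    Tbil a x y = Tbil a y x := by
  unfold Tbil; rw [add_comm x y]; ring

lemma Qform_add (a : Matrix (Fin n) (Fin n) ℤ) (x y : Fin n → ℤ) :
    Qform a (x + y) = Qform a x + Qform a y + Tbil a x y := by
  simp [Tbil]

lemma Qform_smul (a : Matrix (Fin n) (Fin n) ℤ) (c : ℤ) (x : Fin n → ℤ) :
    Qform a (c • x) = c ^ 2 * Qform a x := by
  simp only [Qform, Finset.mul_sum]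
  refine Finset.sum_congr rfl fun i _ => Finset.sum_congr rfl fun j _ => ?_
  simp only [Pi.smul_apply, smul_eq_mul]
  split <;> ring

/-- Key nondegeneracy step: `G v` is not `≡ 0 (mod p)`. -/
lemma exists_index (a : Matrix (Fin n) (Fin n) ℤ) (d : ℤ)
    (hdisc : HasDisc a d) (p : ℕ) (hp : p.Prime) (hpd : ¬ (p : ℤ) ∣ d)
    (v : Fin n → ℤ) (hv : ¬ ∀ i, (p : ℤ) ∣ v i) (hQv : (p : ℤ) ∣ Qform a v) :
    ∃ j, ¬ (p : ℤ) ∣ (gram a *ᵥ v) j := by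
  by_contra hall
  push_neg at hall
  set G := gram a with hG
  have hpZ : Prime (p : ℤ) := Nat.prime_iff_prime_int.mp hp
  by_cases hdet : (p : ℤ) ∣ G.det
  · -- p divides det G = 2^ε d, so p = 2 and n is odd
    have hp2 : (p : ℤ) ∣ 2 ^ (eps n) := by
      rcases (hpZ.dvd_mul.mp (hdisc ▸ hdet)) with h | h
      · exact h
      · exact absurd h hpd
    have heps : eps n = 1 := by
      rcases (show eps n = 0 ∨ eps n = 1 by unfold eps; split <;> simp) with h | h
      · rw [h, pow_zero] at hp2; exact absurd hp2 hpZ.not_dvd_one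
      · exact h
    have hp2' : (p : ℤ) ∣ 2 := by rw [heps, pow_one] at hp2; exact hp2
    have hp2'' : p = 2 := (Nat.prime_dvd_prime_iff_eq hp Nat.prime_two).mp
      (by exact_mod_cast hp2')
    subst hp2''
    have hdetG : G.det = 2 * d := by rw [hdisc, heps]; ring
    -- pick k with v k odd
    push_neg at hv
    obtain ⟨k, hk⟩ := hv
    -- change of basis matrix
    set P : Matrix (Fin n) (Fin n) ℤ := (1 : Matrix (Fin n) (Fin n) ℤ).updateCol k v
      with hP
    have hdetP : P.det = v k := by
      rw [hP, ← Matrix.cramer_apply, Matrix.cramer_one]; rfl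
    set G' : Matrix (Fin n) (Fin n) ℤ := Pᵀ * G * P with hG'
    have hcol : ∀ j, (fun m => P m j) = if j = k then v else Pi.single j 1 := by
      intro j
      funext m
      rw [hP, Matrix.updateCol_apply]
      split
      · simp_all
      · simp [Matrix.one_apply, Pi.single_apply, eq_comm]
    have hentry : ∀ i j, G' i j = Tbil a (fun m => P m i) (fun m => P m j) := by
      intro i j
      rw [Tbil_gram]
      simp only [hG', Matrix.mul_apply, Matrix.transpose_apply, dotProduct,
        Matrix.mulVec, Finset.mul_sum]
      rw [Finset.sum_comm]
      refine Finset.sum_congr rfl fun l _ => ?_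
      rw [Finset.sum_mul]
      refine Finset.sum_congr rfl fun m _ => ?_
      ring
    -- entries of G'
    have hkk : (4 : ℤ) ∣ G' k k := by
      rw [hentry, hcol, if_pos rfl, Tbil_self]
      obtain ⟨c, hc⟩ := hQv
      exact ⟨c, by rw [hc]; push_cast; ring⟩
    have hrow : ∀ j, (2 : ℤ) ∣ G' k j := by
      intro j
      by_cases hj : j = k
      · subst hj; exact dvd_trans ⟨2, by norm_num⟩ hkk
      · rw [hentry, hcol, hcol, if_pos rfl, if_neg hj, Tbil_single]
        simpa using hall j
    have hcolk : ∀ i, i ≠ k → (2 : ℤ) ∣ G' i k := by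
      intro i hi
      have heq : G' i k = G' k i := by
        rw [hentry, hentry]; exact Tbil_comm a _ _
      rw [heq]
      exact hrow i
    -- halve row k
    set h : Fin n → ℤ := fun j => G' k j / 2 with hh
    have h2 : ∀ j, G' k j = 2 * h j := fun j => (Int.mul_ediv_cancel' (hrow j)).symm
    have hrk : G' k = (2 : ℤ) • h := by funext j; simpa [Pi.smul_apply] using h2 j
    set M : Matrix (Fin n) (Fin n) ℤ := G'.updateRow k h with hM
    have hdetG' : G'.det = 2 * M.det := by
      conv_lhs => rw [← Matrix.updateRow_eq_self G' k, hrk]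
      rw [Matrix.det_updateRow_smul]
    have hhk : (2 : ℤ) ∣ h k := by
      obtain ⟨c, hc⟩ := hkk
      refine ⟨c, ?_⟩
      have := h2 k
      omega
    have hMdet : (2 : ℤ) ∣ M.det := by
      have key : ((M.det : ZMod 2)) = 0 := by
        have hmap : ((M.det : ZMod 2)) = ((Int.castRingHom (ZMod 2)).mapMatrix M).det := by
          rw [← RingHom.map_det]; simp
        rw [hmap, RingHom.mapMatrix_apply]
        apply Matrix.det_eq_zero_of_column_eq_zero k
        intro i
        rcases eq_or_ne i k with hi | hi
        · rw [hi]
          simp only [hM, Matrix.map_apply, Matrix.updateRow_self]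
          exact (ZMod.intCast_zmod_eq_zero_iff_dvd _ 2).mpr (by exact_mod_cast hhk)
        · simp only [hM, Matrix.map_apply, Matrix.updateRow_ne hi]
          exact (ZMod.intCast_zmod_eq_zero_iff_dvd _ 2).mpr (by exact_mod_cast hcolk i hi)
      exact_mod_cast (ZMod.intCast_zmod_eq_zero_iff_dvd _ 2).mp key
    have hdetG'' : G'.det = v k * v k * (2 * d) := by
      rw [hG', Matrix.det_mul, Matrix.det_mul, Matrix.det_transpose, hdetP, hdetG]
      ring
    -- contradiction: 4 ∣ 2 * v k ^2 * d with v k, d odd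
    obtain ⟨m, hm⟩ := hMdet
    have : (2 : ℤ) ∣ v k * v k * d := ⟨m, by nlinarith [hdetG', hdetG'']⟩
    have h2Z : Prime (2 : ℤ) := Int.prime_two
    rcases h2Z.dvd_mul.mp this with h | h
    · rcases h2Z.dvd_mul.mp h with h | h
      · exact hk (by exact_mod_cast h)
      · exact hk (by exact_mod_cast h)
    · exact hpd (by exact_mod_cast h)
  · -- p does not divide det G: use adjugate
    apply hv
    intro i
    have key : G.adjugate *ᵥ (G *ᵥ v) = G.det • v := by
      rw [Matrix.mulVec_mulVec, Matrix.adjugate_mul, Matrix.smul_mulVec,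
        Matrix.one_mulVec]
    have hdvd : (p : ℤ) ∣ (G.adjugate *ᵥ (G *ᵥ v)) i := by
      simp only [Matrix.mulVec, dotProduct]
      exact Finset.dvd_sum fun j _ => Dvd.dvd.mul_left (hall j) _
    rw [key] at hdvd
    simp only [Pi.smul_apply, smul_eq_mul] at hdvd
    exact (hpZ.dvd_or_dvd hdvd).resolve_left hdet

end HenselAux

/-- Hensel-type lifting of isotropic vectors mod `p` to vectors whose
value is divisible by `p²` (valid for all primes, including `p = 2`). -/
theorem hensel_lift_isotropic (n : ℕ) (a : Matrix (Fin n) (Fin n) ℤ) (d : ℤ)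
    (hdisc : HasDisc a d) (p : ℕ) (hp : p.Prime) (hpd : ¬ (p : ℤ) ∣ d)
    (v : Fin n → ℤ) (hv : ¬ ∀ i, (p : ℤ) ∣ v i) (hQv : (p : ℤ) ∣ Qform a v) :
    ∃ w : Fin n → ℤ, (∀ i, (p : ℤ) ∣ (w i - v i)) ∧ ((p : ℤ) ^ 2 ∣ Qform a w) := by
  classical
  haveI : Fact p.Prime := ⟨hp⟩
  obtain ⟨j, hj⟩ := HenselAux.exists_index a d hdisc p hp hpd v hv hQv
  set t : ℤ := (gram a *ᵥ v) j with ht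
  obtain ⟨q, hq⟩ := hQv
  -- choose c with p ∣ q + c * t
  have htbar : (t : ZMod p) ≠ 0 := fun h =>
    hj ((ZMod.intCast_zmod_eq_zero_iff_dvd t p).mp h)
  set cbar : ZMod p := (-(q : ZMod p)) * (t : ZMod p)⁻¹ with hcbar
  set c : ℤ := (cbar.val : ℤ) with hc
  have hcast : ((c : ℤ) : ZMod p) = cbar := by
    rw [hc]
    push_cast
    rw [ZMod.natCast_val, ZMod.cast_id]
  have hdvdqt : (p : ℤ) ∣ q + c * t := by
    rw [← ZMod.intCast_zmod_eq_zero_iff_dvd]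
    push_cast
    rw [hcast, hcbar]
    rw [show (-(q : ZMod p) * (t : ZMod p)⁻¹) * (t : ZMod p)
          = -((q : ZMod p) * ((t : ZMod p)⁻¹ * (t : ZMod p))) by ring]
    rw [inv_mul_cancel₀ htbar, mul_one]
    simp
  obtain ⟨m, hm⟩ := hdvdqt
  refine ⟨v + ((p : ℤ) * c) • Pi.single j 1, fun i => ?_, ?_⟩
  · simp only [Pi.add_apply, Pi.smul_apply, smul_eq_mul, add_sub_cancel_left]
    exact Dvd.dvd.mul_right (Dvd.dvd.mul_right dvd_rfl c) _
  · rw [HenselAux.Qform_add, HenselAux.Qform_smul]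
    have hT : Tbil a v (((p : ℤ) * c) • Pi.single j 1) = (p : ℤ) * c * t := by
      rw [HenselAux.Tbil_gram, Matrix.mulVec_smul, dotProduct_smul]
      rw [smul_eq_mul, ← HenselAux.Tbil_gram, HenselAux.Tbil_single]
    rw [hT, hq]
    refine ⟨m + c ^ 2 * Qform a (Pi.single j 1), ?_⟩
    have : q + c * t = (p : ℤ) * m := hm
    nlinarith [this]
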